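/- Let X be a locally ordered space and ∗ ∈ X. In the category of locally ordered spaces and locally increasing maps, the pair of maps i_∗, c_∗ : S¹ → S⃗¹ × X (where i_∗(s) = (s,∗) and c_∗(s) = (1,∗)) has a coequalizer if, and only if, the family of open neighbourhoods of ∗ in X has a smallest element; and if O is this smallest open neighbourhood, then q_O : S⃗¹ × X → X_O is the coequalizer. -/

import Mathlib

universe u v w v'

/-! ## Ordered bases and locally ordered spaces -/

/-- An *ordered subset* of `X`: a pair of a carrier set and a relation on `X`
(intended to be a partial order on the carrier). -/
structure OSet (X : Type u) : Type u where
  carrier : Set X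
  le : X → X → Prop

namespace OSet

variable {X : Type u} {Y : Type v}

/-- `B` is a partially ordered subset: the relation only relates elements of the
carrier, is reflexive on the carrier, antisymmetric and transitive. -/
def IsPoset (B : OSet X) : Prop :=
  (∀ p q, B.le p q → p ∈ B.carrier ∧ q ∈ B.carrier) ∧
  (∀ p ∈ B.carrier, B.le p p) ∧
  (∀ p q, B.le p q → B.le q p → p = q) ∧
  (∀ p q r, B.le p q → B.le q r → B.le p r)

/-- `B ⊆_lax B'`. -/
def laxSub (B B' : OSet X) : Prop :=
  B.carrier ⊆ B'.carrier ∧ ∀ p q, B.le p q → B'.le p q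

/-- `B ⊆_str B'` : the carrier is included and `≤_B` is the restriction of `≤_{B'}`
to the carrier of `B`. -/
def strSub (B B' : OSet X) : Prop :=
  B.carrier ⊆ B'.carrier ∧ ∀ p ∈ B.carrier, ∀ q ∈ B.carrier, (B.le p q ↔ B'.le p q)

/-- Product of two ordered subsets, with the product order. -/
def prod (B : OSet X) (B' : OSet Y) : OSet (X × Y) where
  carrier := B.carrier ×ˢ B'.carrier
  le p q := B.le p.1 q.1 ∧ B'.le p.2 q.2

/-- The restriction of an ordered subset to a subset `S` (of its carrier). -/
def restrict (B : OSet X) (S : Set X) : OSet X where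
  carrier := S
  le p q := B.le p q ∧ p ∈ S ∧ q ∈ S

/-- `B` is a Nachbin ordered (sub)space: its order is closed in the product of the
subspace `B.carrier` (with the topology inherited from `X`) with itself. -/
def IsNachbin [TopologicalSpace X] (B : OSet X) : Prop :=
  IsClosed {p : B.carrier × B.carrier | B.le p.1 p.2}

end OSet

/-- `𝔅` is an *ordered basis* on the topological space `X`. -/
structure IsOrderedBasis {X : Type u} [TopologicalSpace X] (𝔅 : Set (OSet X)) : Prop where
  isPoset : ∀ B ∈ 𝔅, B.IsPoset
  isBasis : TopologicalSpace.IsTopologicalBasis (OSet.carrier '' 𝔅)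
  compat : ∀ x : X, ∀ B ∈ 𝔅, ∀ B' ∈ 𝔅, x ∈ B.carrier → x ∈ B'.carrier →
    ∃ B'' ∈ 𝔅, x ∈ B''.carrier ∧ B''.carrier ⊆ B.carrier ∩ B'.carrier ∧
      ∀ p q, B''.le p q → B.le p q ∧ B'.le p q

/-- `𝔅` is a *strict* ordered basis: the interpolating element `B''` can be chosen
with `B'' ⊆_str B` and `B'' ⊆_str B'`. -/
def IsStrictOrderedBasis {X : Type u} [TopologicalSpace X] (𝔅 : Set (OSet X)) : Prop :=
  IsOrderedBasis 𝔅 ∧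
    ∀ x : X, ∀ B ∈ 𝔅, ∀ B' ∈ 𝔅, x ∈ B.carrier → x ∈ B'.carrier →
      ∃ B'' ∈ 𝔅, x ∈ B''.carrier ∧ B''.strSub B ∧ B''.strSub B'

/-- `𝔅'` is coarser than `𝔅`. -/
def CoarserThan {X : Type u} (𝔅' 𝔅 : Set (OSet X)) : Prop :=
  ∀ x : X, ∀ B' ∈ 𝔅', x ∈ B'.carrier → ∃ B ∈ 𝔅, x ∈ B.carrier ∧ B.laxSub B'

/-- `𝔅'` is strictly coarser than `𝔅` (`⊆_lax` replaced by `⊆_str`). -/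
def StrictCoarserThan {X : Type u} (𝔅' 𝔅 : Set (OSet X)) : Prop :=
  ∀ x : X, ∀ B' ∈ 𝔅', x ∈ B'.carrier → ∃ B ∈ 𝔅, x ∈ B.carrier ∧ B.strSub B'

/-- Two ordered bases are equivalent when each is coarser than the other. -/
def EquivBases {X : Type u} (𝔅 𝔅' : Set (OSet X)) : Prop :=
  CoarserThan 𝔅' 𝔅 ∧ CoarserThan 𝔅 𝔅'

/-- Strict equivalence of ordered bases. -/
def StrictEquivBases {X : Type u} (𝔅 𝔅' : Set (OSet X)) : Prop :=
  StrictCoarserThan 𝔅' 𝔅 ∧ StrictCoarserThan 𝔅 𝔅'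

/-- The *open posets* `Ō(𝔅)` determined by an ordered basis `𝔅`. -/
def openPosets {X : Type u} (𝔅 : Set (OSet X)) : Set (OSet X) :=
  {A | ∀ x ∈ A.carrier, ∃ B ∈ 𝔅, x ∈ B.carrier ∧ B.laxSub A}

/-- `f` is locally increasing at `x`, w.r.t. the ordered bases `𝔅` (source) and
`𝔅'` (target). -/
def LocIncrAt {X : Type u} {Y : Type v} (𝔅 : Set (OSet X)) (𝔅' : Set (OSet Y))
    (f : X → Y) (x : X) : Prop :=
  ∀ B' ∈ 𝔅', f x ∈ B'.carrier →
    ∃ B ∈ 𝔅, x ∈ B.carrier ∧ (∀ p ∈ B.carrier, f p ∈ B'.carrier) ∧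
      ∀ p q, B.le p q → B'.le (f p) (f q)

/-- `f` is locally increasing. -/
def LocIncr {X : Type u} {Y : Type v} (𝔅 : Set (OSet X)) (𝔅' : Set (OSet Y))
    (f : X → Y) : Prop :=
  ∀ x : X, LocIncrAt 𝔅 𝔅' f x

/-- The locally ordered space given by the basis `𝔅` is locally Nachbin. -/
def IsLocallyNachbin {X : Type u} [TopologicalSpace X] (𝔅 : Set (OSet X)) : Prop :=
  ∀ x : X, ∀ O ∈ openPosets 𝔅, x ∈ O.carrier →
    ∃ O' ∈ openPosets 𝔅, x ∈ O'.carrier ∧ O'.laxSub O ∧ O'.IsNachbin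

/-- The product ordered basis on `X × Y`. -/
def prodBasis {X : Type u} {Y : Type v} (𝔅 : Set (OSet X)) (𝔅' : Set (OSet Y)) :
    Set (OSet (X × Y)) :=
  {C | ∃ B ∈ 𝔅, ∃ B' ∈ 𝔅', C = B.prod B'}

/-- A topological space viewed as a locally ordered space: all its open subsets,
each ordered by equality. -/
def trivBasis (T : Type v) [TopologicalSpace T] : Set (OSet T) :=
  {B | ∃ U : Set T, IsOpen U ∧ B = ⟨U, fun p q => p = q ∧ p ∈ U⟩}

/-! ## The directed circle -/

/-- The proper open arc `{e^{ix} : a < x < b}` of the unit circle, with its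
standard partial order. -/
def arcOSet (a b : ℝ) : OSet Circle where
  carrier := Circle.exp '' Set.Ioo a b
  le p q := ∃ x ∈ Set.Ioo a b, ∃ y ∈ Set.Ioo a b, x ≤ y ∧ Circle.exp x = p ∧ Circle.exp y = q

/-- The strict ordered basis of the directed circle `S⃗¹`: all proper open arcs
with their standard orders. -/
def dCircleBasis : Set (OSet Circle) :=
  {B | ∃ a b : ℝ, 0 < b - a ∧ b - a < 2 * Real.pi ∧ B = arcOSet a b}

/-- `K(f) = {t | ∀ s s', f (s,t) = f (s',t)}`. -/
def Kset {X : Type u} {Y : Type v} (f : Circle × X → Y) : Set X :=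
  {t | ∀ s s' : Circle, f (s, t) = f (s', t)}

/-! ## The space `X_O` -/

/-- The underlying set of `X_O := O ⊔ (S¹ × (X ∖ O))`. -/
def XO (X : Type u) (O : Set X) : Type u := ↥O ⊕ (Circle × ↥(Oᶜ))

open Classical in
/-- The map `q_O : S¹ × X → X_O`. -/
noncomputable def qO {X : Type u} (O : Set X) : Circle × X → XO X O := fun p =>
  if h : p.2 ∈ O then Sum.inl ⟨p.2, h⟩ else Sum.inr (p.1, ⟨p.2, h⟩)

/-- `X_O` carries the final topology of `q_O`. -/
noncomputable instance XO.topology {X : Type u} [TopologicalSpace X] (O : Set X) :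
    TopologicalSpace (XO X O) :=
  TopologicalSpace.coinduced (qO O) inferInstance

/-- The subset `U_{α,A}` of `X_O` (for `αc` a set of points of the circle and
`A` a subset of `X`). -/
def USet {X : Type u} (O : Set X) (αc : Set Circle) (A : Set X) : Set (XO X O) :=
  Sum.inl '' {t : ↥O | (t : X) ∈ A} ∪
    Sum.inr '' {p : Circle × ↥(Oᶜ) | p.1 ∈ αc ∧ (p.2 : X) ∈ A}

/-- The second component of an element of `X_O`. -/
def XO.p2 {X : Type u} {O : Set X} : XO X O → X :=
  Sum.elim (fun t => (t : X)) (fun p => (p.2 : X))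

/-- The relation `≤¹_{α,A}` on `X_O`: the image under `q_O` of the product order
on `α × A`. -/
def leOne {X : Type u} (O : Set X) (α : OSet Circle) (A : OSet X) (u u' : XO X O) : Prop :=
  ∃ x x' : Circle × X, α.le x.1 x'.1 ∧ A.le x.2 x'.2 ∧ qO O x = u ∧ qO O x' = u'

/-- The relation `⊑` on `X_O`. -/
def sqsub {X : Type u} (O : Set X) (α : OSet Circle) (A : OSet X) (u u' : XO X O) : Prop :=
  A.le (XO.p2 u) (XO.p2 u') ∧
    ((∃ t : ↥O, u = Sum.inl t) ∨ (∃ t : ↥O, u' = Sum.inl t) ∨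
      ∃ (s s' : Circle) (t t' : ↥(Oᶜ)),
        u = Sum.inr (s, t) ∧ u' = Sum.inr (s', t') ∧ α.le s s')

/-- The poset `(U_{α,A}, ≤_{α,A})`, where `≤_{α,A}` is the transitive closure of
`≤¹_{α,A}`. -/
def UOSet {X : Type u} (O : Set X) (α : OSet Circle) (A : OSet X) : OSet (XO X O) where
  carrier := USet O α.carrier A.carrier
  le := Relation.TransGen (leOne O α A)

/-- The ordered basis of `X_O`: the posets `(U_{α,A}, ≤_{α,A})` for `α` a proper
open arc and `A` an open poset of `X`. -/
def XOBasis {X : Type u} (𝔅 : Set (OSet X)) (O : Set X) : Set (OSet (XO X O)) :=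
  {C | ∃ a b : ℝ, 0 < b - a ∧ b - a < 2 * Real.pi ∧
    ∃ A ∈ openPosets 𝔅, C = UOSet O (arcOSet a b) A}

/-! ## The category of locally ordered spaces -/

/-- A bundled locally ordered space (an object of the category `LPO`). -/
structure LocOrdSpace : Type (u + 1) where
  carrier : Type u
  top : TopologicalSpace carrier
  basis : Set (OSet carrier)
  isBasis : @IsOrderedBasis carrier top basis

/-- `g : B → C` is the coequalizer of `i, j : A → B` in the full subcategory of
locally ordered spaces (at universe `u`) whose objects satisfy `P`: `g` is locally
increasing, coequalizes `i` and `j`, and every locally increasing map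
`f : B → Y` (for `Y` an object satisfying `P`) with `f ∘ i = f ∘ j` factors
through `g` by a unique locally increasing map. -/
def IsCoeqIn (P : LocOrdSpace.{u} → Prop) {A : Type w} {B : Type v} {C : Type v'}
    (𝔅 : Set (OSet B)) (ℭ : Set (OSet C)) (i j : A → B) (g : B → C) : Prop :=
  LocIncr 𝔅 ℭ g ∧ g ∘ i = g ∘ j ∧
    ∀ Y : LocOrdSpace.{u}, P Y → ∀ f : B → Y.carrier,
      LocIncr 𝔅 Y.basis f → f ∘ i = f ∘ j →
        ∃! h : C → Y.carrier, LocIncr ℭ Y.basis h ∧ f = h ∘ g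


/-! For a locally increasing `f` on `S⃗¹ × X`, the set `K(f)` of the `t` over which `f` is
constant along the circle is open: near `t ∈ K(f)` the maps `f(-, t')` are increasing along a
full turn inside a single poset of the target (compactness of the circle and the tube lemma),
hence constant by antisymmetry. A map coequalizing `i⋆` and `c⋆` has `⋆ ∈ K(f)`; so if `O` is
the smallest open neighbourhood of `⋆`, it is constant along the circles over `O` and factors
uniquely through `q_O`. Conversely a coequalizer `g` factors each `q_U`, `U` an open
neighbourhood of `⋆`, and `K(q_U) = U`, so the open set `K(g) ∋ ⋆` lies inside every such `U`. -/

open Set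

local notation "π" => Real.pi

namespace OSet

variable {X : Type u} {B B' B'' : OSet X}

lemma laxSub.refl (B : OSet X) : B.laxSub B := ⟨Subset.rfl, fun _ _ h => h⟩

lemma laxSub.trans (h : B.laxSub B') (h' : B'.laxSub B'') : B.laxSub B'' :=
  ⟨h.1.trans h'.1, fun p q hpq => h'.2 p q (h.2 p q hpq)⟩

end OSet

lemma Relation.TransGen.rel_of_forall {α β : Type*} {r : α → α → Prop} {R : β → β → Prop}
    (hR : ∀ p q r, R p q → R q r → R p r) (g : α → β) (h : ∀ a b, r a b → R (g a) (g b))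
    {a b : α} (hab : Relation.TransGen r a b) : R (g a) (g b) := by
  induction hab with
  | single hab => exact h _ _ hab
  | tail _ hbc ih => exact hR _ _ _ ih (h _ _ hbc)

namespace LocIncr

variable {X : Type u} {Y : Type v} {𝔄 𝔄' : Set (OSet X)} {𝔟 𝔟' : Set (OSet Y)} {f : X → Y}

lemma mono_source (h : 𝔄 ⊆ 𝔄') (hf : LocIncr 𝔄 𝔟 f) : LocIncr 𝔄' 𝔟 f := fun x B' hB' hx =>
  let ⟨B, hB, hxB, hmaps, hincr⟩ := hf x B' hB' hx
  ⟨B, h hB, hxB, hmaps, hincr⟩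

lemma anti_target (h : 𝔟' ⊆ 𝔟) (hf : LocIncr 𝔄 𝔟 f) : LocIncr 𝔄 𝔟' f := fun x B' hB' hx =>
  hf x B' (h hB') hx

end LocIncr

namespace IsOrderedBasis

variable {X : Type u} [TopologicalSpace X] {𝔅 : Set (OSet X)}

lemma of_laxSub (hposet : ∀ B ∈ 𝔅, B.IsPoset)
    (hbasis : TopologicalSpace.IsTopologicalBasis (OSet.carrier '' 𝔅))
    (hcompat : ∀ x : X, ∀ B ∈ 𝔅, ∀ B' ∈ 𝔅, x ∈ B.carrier → x ∈ B'.carrier →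
      ∃ B'' ∈ 𝔅, x ∈ B''.carrier ∧ B''.laxSub B ∧ B''.laxSub B') :
    IsOrderedBasis 𝔅 where
  isPoset := hposet
  isBasis := hbasis
  compat x B hB B' hB' hx hx' :=
    let ⟨B'', hB'', hx'', hsub, hsub'⟩ := hcompat x B hB B' hB' hx hx'
    ⟨B'', hB'', hx'', fun _ h => ⟨hsub.1 h, hsub'.1 h⟩, fun p q h => ⟨hsub.2 p q h, hsub'.2 p q h⟩⟩

lemma isOpen_carrier (h𝔅 : IsOrderedBasis 𝔅) {B : OSet X} (hB : B ∈ 𝔅) : IsOpen B.carrier :=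
  h𝔅.isBasis.isOpen ⟨B, hB, rfl⟩

lemma exists_mem_subset (h𝔅 : IsOrderedBasis 𝔅) {U : Set X} (hU : IsOpen U) {x : X}
    (hx : x ∈ U) : ∃ B ∈ 𝔅, x ∈ B.carrier ∧ B.carrier ⊆ U := by
  obtain ⟨_, ⟨B, hB, rfl⟩, hxB, hBU⟩ := h𝔅.isBasis.exists_subset_of_mem_open hx hU
  exact ⟨B, hB, hxB, hBU⟩

lemma exists_mem (h𝔅 : IsOrderedBasis 𝔅) (x : X) : ∃ B ∈ 𝔅, x ∈ B.carrier :=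
  let ⟨B, hB, hxB, _⟩ := h𝔅.exists_mem_subset isOpen_univ (mem_univ x)
  ⟨B, hB, hxB⟩

lemma exists_laxSub_laxSub (h𝔅 : IsOrderedBasis 𝔅) {x : X} {B B' : OSet X} (hB : B ∈ 𝔅)
    (hB' : B' ∈ 𝔅) (hxB : x ∈ B.carrier) (hxB' : x ∈ B'.carrier) :
    ∃ B'' ∈ 𝔅, x ∈ B''.carrier ∧ B''.laxSub B ∧ B''.laxSub B' := by
  obtain ⟨B'', hB'', hx, hsub, hle⟩ := h𝔅.compat x B hB B' hB' hxB hxB'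
  exact ⟨B'', hB'', hx, ⟨fun _ h => (hsub h).1, fun p q h => (hle p q h).1⟩,
    ⟨fun _ h => (hsub h).2, fun p q h => (hle p q h).2⟩⟩

lemma exists_laxSub_subset (h𝔅 : IsOrderedBasis 𝔅) {B : OSet X} (hB : B ∈ 𝔅) {U : Set X}
    (hU : IsOpen U) {x : X} (hxB : x ∈ B.carrier) (hxU : x ∈ U) :
    ∃ A ∈ 𝔅, x ∈ A.carrier ∧ A.carrier ⊆ U ∧ A.laxSub B := by
  obtain ⟨B', hB', hxB', hB'U⟩ :=
    h𝔅.exists_mem_subset ((h𝔅.isOpen_carrier hB).inter hU) ⟨hxB, hxU⟩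
  obtain ⟨A, hA, hxA, hAB, hAB'⟩ := h𝔅.exists_laxSub_laxSub hB hB' hxB hxB'
  exact ⟨A, hA, hxA, fun _ h => (hB'U (hAB'.1 h)).2, hAB⟩

lemma le_refl (h𝔅 : IsOrderedBasis 𝔅) {B : OSet X} (hB : B ∈ 𝔅) {x : X} (hx : x ∈ B.carrier) :
    B.le x x :=
  (h𝔅.isPoset B hB).2.1 x hx

end IsOrderedBasis

lemma mem_openPosets_of_mem {X : Type u} {𝔅 : Set (OSet X)} {B : OSet X} (hB : B ∈ 𝔅) :
    B ∈ openPosets 𝔅 :=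
  fun _ hx => ⟨B, hB, hx, OSet.laxSub.refl B⟩

section DirectedCircle

lemma arcOSet_le_exp {a b y z : ℝ} (hy : y ∈ Ioo a b) (hz : z ∈ Ioo a b) (hyz : y ≤ z) :
    (arcOSet a b).le (Circle.exp y) (Circle.exp z) :=
  ⟨y, hy, z, hz, hyz, rfl, rfl⟩

lemma arcOSet_laxSub_arcOSet {a b c d : ℝ} (hac : a ≤ c) (hdb : d ≤ b) :
    (arcOSet c d).laxSub (arcOSet a b) := by
  have hsub : Ioo c d ⊆ Ioo a b := Ioo_subset_Ioo hac hdb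
  exact ⟨image_mono hsub, fun _ _ ⟨y, hy, z, hz, hyz, hp, hq⟩ =>
    ⟨y, hsub hy, z, hsub hz, hyz, hp, hq⟩⟩

lemma arcOSet_translate_laxSub (a b : ℝ) {c : ℝ} (hc : Circle.exp c = 1) :
    (arcOSet (a + c) (b + c)).laxSub (arcOSet a b) := by
  have hexp (y : ℝ) : Circle.exp (y - c) = Circle.exp y := by rw [Circle.exp_sub, hc, div_one]
  have hmem {y : ℝ} (hy : y ∈ Ioo (a + c) (b + c)) : y - c ∈ Ioo a b :=
    ⟨by linarith [hy.1], by linarith [hy.2]⟩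
  refine ⟨?_, ?_⟩
  · rintro _ ⟨y, hy, rfl⟩
    exact ⟨_, hmem hy, hexp y⟩
  · rintro _ _ ⟨y, hy, z, hz, hyz, rfl, rfl⟩
    exact ⟨_, hmem hy, _, hmem hz, by linarith, hexp y, hexp z⟩

lemma exists_arcOSet_translate_laxSub {a b x : ℝ} (hx : Circle.exp x ∈ (arcOSet a b).carrier) :
    ∃ c, x ∈ Ioo (a + c) (b + c) ∧ (arcOSet (a + c) (b + c)).laxSub (arcOSet a b) := by
  obtain ⟨ξ, hξ, hξx⟩ := hx
  refine ⟨x - ξ, ⟨by linarith [hξ.1], by linarith [hξ.2]⟩, arcOSet_translate_laxSub a b ?_⟩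
  rw [Circle.exp_sub, hξx, div_self']

lemma arcOSet_isPoset {a b : ℝ} (hab : b - a < 2 * π) : (arcOSet a b).IsPoset := by
  have hinj : InjOn Circle.exp (Ioo a b) := (Circle.exp_injOn_Icc hab).mono Ioo_subset_Icc_self
  refine ⟨fun _ _ ⟨y, hy, z, hz, _, hp, hq⟩ => ⟨⟨y, hy, hp⟩, ⟨z, hz, hq⟩⟩,
    fun _ ⟨y, hy, hp⟩ => ⟨y, hy, y, hy, le_rfl, hp, hp⟩, ?_, ?_⟩
  · rintro _ _ ⟨y, hy, z, hz, hyz, rfl, rfl⟩ ⟨z', hz', y', hy', hzy, hz'z, hy'y⟩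
    rw [hinj hz' hz hz'z, hinj hy' hy hy'y] at hzy
    rw [le_antisymm hyz hzy]
  · rintro _ _ _ ⟨y, hy, z, hz, hyz, rfl, rfl⟩ ⟨z', hz', w, hw, hzw, hz'z, rfl⟩
    rw [hinj hz' hz hz'z] at hzw
    exact ⟨y, hy, w, hw, hyz.trans hzw, rfl, rfl⟩

lemma exists_arcOSet_subset {W : Set Circle} (hW : IsOpen W) {s : Circle} (hs : s ∈ W) :
    ∃ a b : ℝ, 0 < b - a ∧ b - a < 2 * π ∧ s ∈ (arcOSet a b).carrier ∧
      (arcOSet a b).carrier ⊆ W := by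
  have hx : Circle.exp (Complex.arg s) = s := Circle.exp_arg s
  obtain ⟨ε, hε, hball⟩ := Metric.isOpen_iff.1 (hW.preimage Circle.exp.continuous) _
    (by rw [mem_preimage, hx]; exact hs)
  have hδ : min ε 1 ≤ ε := min_le_left ε 1
  have hδ' : min ε 1 ≤ 1 := min_le_right ε 1
  have hδpos : 0 < min ε 1 := lt_min hε one_pos
  refine ⟨Complex.arg s - min ε 1, Complex.arg s + min ε 1, by linarith,
    by linarith [Real.pi_gt_three], ⟨_, ⟨by linarith, by linarith⟩, hx⟩, ?_⟩
  rintro _ ⟨y, hy, rfl⟩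
  exact hball (by rw [Real.ball_eq_Ioo]; exact ⟨by linarith [hy.1], by linarith [hy.2]⟩)

lemma exists_arcOSet_laxSub_laxSub {a b a' b' : ℝ} (hab : b - a < 2 * π) {s : Circle}
    (hs : s ∈ (arcOSet a b).carrier) (hs' : s ∈ (arcOSet a' b').carrier) :
    ∃ c d : ℝ, 0 < d - c ∧ d - c < 2 * π ∧ s ∈ (arcOSet c d).carrier ∧
      (arcOSet c d).laxSub (arcOSet a b) ∧ (arcOSet c d).laxSub (arcOSet a' b') := by
  obtain ⟨x, hx, rfl⟩ := hs
  obtain ⟨k, hxk, hk⟩ := exists_arcOSet_translate_laxSub hs'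
  have hc : max a (a' + k) < x := max_lt hx.1 hxk.1
  have hd : x < min b (b' + k) := lt_min hx.2 hxk.2
  refine ⟨max a (a' + k), min b (b' + k), by linarith, ?_, ⟨x, ⟨hc, hd⟩, rfl⟩,
    arcOSet_laxSub_arcOSet (le_max_left _ _) (min_le_left _ _),
    (arcOSet_laxSub_arcOSet (le_max_right _ _) (min_le_right _ _)).trans hk⟩
  linarith [le_max_left a (a' + k), min_le_left b (b' + k)]

lemma isOrderedBasis_dCircleBasis : IsOrderedBasis dCircleBasis := by
  refine .of_laxSub ?_ ?_ ?_
  · rintro _ ⟨a, b, -, hab, rfl⟩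
    exact arcOSet_isPoset hab
  · refine TopologicalSpace.isTopologicalBasis_of_isOpen_of_nhds ?_ ?_
    · rintro _ ⟨_, ⟨a, b, -, -, rfl⟩, rfl⟩
      exact isLocalHomeomorph_circleExp.isOpenMap _ isOpen_Ioo
    · intro s W hs hW
      obtain ⟨a, b, h₁, h₂, hsα, hαW⟩ := exists_arcOSet_subset hW hs
      exact ⟨_, ⟨_, ⟨a, b, h₁, h₂, rfl⟩, rfl⟩, hsα, hαW⟩
  · rintro s _ ⟨a, b, -, hab, rfl⟩ _ ⟨a', b', -, -, rfl⟩ hs hs'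
    obtain ⟨c, d, h₁, h₂, hs'', hsub, hsub'⟩ := exists_arcOSet_laxSub_laxSub hab hs hs'
    exact ⟨_, ⟨c, d, h₁, h₂, rfl⟩, hs'', hsub, hsub'⟩

lemma nonempty_of_mem_dCircleBasis {α : OSet Circle} (hα : α ∈ dCircleBasis) :
    α.carrier.Nonempty := by
  obtain ⟨a, b, hab, -, rfl⟩ := hα
  exact ⟨_, (a + b) / 2, ⟨by linarith, by linarith⟩, rfl⟩

lemma exists_exp_eq_of_mem_Icc (s : Circle) : ∃ y ∈ Icc 0 (2 * π), Circle.exp y = s := by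
  have h₁ := Complex.neg_pi_lt_arg (s : ℂ)
  have h₂ := Complex.arg_le_pi (s : ℂ)
  rcases le_or_gt 0 (Complex.arg s) with h | h
  · exact ⟨Complex.arg s, ⟨h, by linarith [Real.pi_pos]⟩, Circle.exp_arg s⟩
  · exact ⟨Complex.arg s + 2 * π, ⟨by linarith, by linarith⟩,
      (Circle.exp_add_two_pi _).trans (Circle.exp_arg s)⟩

lemma exists_le_self_of_mem_dCircleBasis {α : OSet Circle} (hα : α ∈ dCircleBasis) :
    ∃ s, α.le s s :=
  let ⟨s, hs⟩ := nonempty_of_mem_dCircleBasis hα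
  ⟨s, isOrderedBasis_dCircleBasis.le_refl hα hs⟩

end DirectedCircle

section LocallyMonotone

variable {β : Type*}

def RelMonotoneOn (R : β → β → Prop) (g : ℝ → β) (U : Set ℝ) : Prop :=
  ∀ y ∈ U, ∀ z ∈ U, y ≤ z → R (g y) (g z)

variable {R : β → β → Prop}

/-- By the Lebesgue number lemma, points at distance `< δ` share a domain of monotonicity, and
any two points are joined by a chain of steps `δ / 2`. -/
theorem RelMonotoneOn.Icc_of_locally (hR : ∀ p q r, R p q → R q r → R p r) {g : ℝ → β}
    {a b : ℝ} (hloc : ∀ x ∈ Icc a b, ∃ U, IsOpen U ∧ x ∈ U ∧ RelMonotoneOn R g U) :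
    RelMonotoneOn R g (Icc a b) := by
  obtain ⟨δ, hδ, hleb⟩ := lebesgue_number_lemma_of_metric_sUnion
    (c := {U | IsOpen U ∧ RelMonotoneOn R g U}) isCompact_Icc (fun U hU => hU.1)
    (fun x hx => let ⟨U, hUo, hxU, hU⟩ := hloc x hx; ⟨U, ⟨hUo, hU⟩, hxU⟩)
  have hstep : ∀ y ∈ Icc a b, ∀ z, y ≤ z → z < y + δ → R (g y) (g z) := by
    intro y hy z hyz hzy
    obtain ⟨U, ⟨-, hU⟩, hball⟩ := hleb y hy
    exact hU y (hball (Metric.mem_ball_self hδ)) z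
      (hball (by rw [Real.ball_eq_Ioo]; exact ⟨by linarith, hzy⟩)) hyz
  intro y hy z hz hyz
  have hchain : ∀ n : ℕ, ∀ w ∈ Icc y z, z - w < n * (δ / 2) → R (g w) (g z) := by
    intro n
    induction n with
    | zero => intro w hw h; simp only [CharP.cast_eq_zero, zero_mul] at h; linarith [hw.2]
    | succ n ih =>
      intro w hw h
      have hwab : w ∈ Icc a b := Icc_subset_Icc hy.1 hz.2 hw
      by_cases hclose : z - w < δ
      · exact hstep w hwab z hw.2 (by linarith)
      · have hw' : w + δ / 2 ∈ Icc y z := ⟨by linarith [hw.1], by linarith⟩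
        exact hR _ _ _ (hstep w hwab _ (by linarith) (by linarith))
          (ih _ hw' (by push_cast at h; linarith))
  obtain ⟨n, hn⟩ := exists_nat_gt ((z - y) / (δ / 2))
  exact hchain n y ⟨le_rfl, hyz⟩ (by rwa [div_lt_iff₀ (by positivity)] at hn)

lemma eq_of_relMonotoneOn_comp_exp (hanti : ∀ p q, R p q → R q p → p = q) {φ : Circle → β}
    (hφ : RelMonotoneOn R (φ ∘ Circle.exp) (Icc 0 (2 * π))) (s s' : Circle) : φ s = φ s' := by
  suffices h : ∀ s, φ s = φ 1 by rw [h s, h s']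
  intro s
  obtain ⟨y, hy, rfl⟩ := exists_exp_eq_of_mem_Icc s
  have h2π : (0 : ℝ) ≤ 2 * π := by positivity
  have h₁ := hφ y hy (2 * π) ⟨h2π, le_rfl⟩ hy.2
  have h₂ := hφ 0 ⟨le_rfl, h2π⟩ y hy hy.1
  simp only [Function.comp_apply, Circle.exp_two_pi, Circle.exp_zero] at h₁ h₂
  exact hanti _ _ h₁ h₂

end LocallyMonotone

section Kset

variable {X : Type u} {Y : Type v} {f : Circle × X → Y}

lemma mem_Kset_of_comp_eq {star : X}
    (hf : f ∘ (fun s : Circle => (s, star)) = f ∘ (fun _ : Circle => ((1 : Circle), star))) :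
    star ∈ Kset f := fun s s' => (congrFun hf s).trans (congrFun hf s').symm

lemma Kset_subset_Kset_comp {Z : Type*} (h : Y → Z) : Kset f ⊆ Kset (h ∘ f) :=
  fun _ ht s s' => congrArg h (ht s s')

variable [TopologicalSpace X] {𝔅 : Set (OSet X)} {𝔟 : Set (OSet Y)}

lemma exists_relMonotoneOn_of_locIncr (h𝔅 : IsOrderedBasis 𝔅)
    (hf : LocIncr (prodBasis dCircleBasis 𝔅) 𝔟 f) {B' : OSet Y} (hB' : B' ∈ 𝔟) {x : ℝ} {t : X}
    (hx : f (Circle.exp x, t) ∈ B'.carrier) :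
    ∃ I : Set ℝ, IsOpen I ∧ x ∈ I ∧ ∃ A ∈ 𝔅, t ∈ A.carrier ∧
      ∀ t' ∈ A.carrier, RelMonotoneOn B'.le (fun y => f (Circle.exp y, t')) I := by
  obtain ⟨_, ⟨_, ⟨a, b, -, -, rfl⟩, A, hA, rfl⟩, ⟨hxα, htA⟩, -, hincr⟩ := hf _ B' hB' hx
  obtain ⟨c, hxc, hsub⟩ := exists_arcOSet_translate_laxSub hxα
  exact ⟨_, isOpen_Ioo, hxc, A, hA, htA, fun t' ht' y hy z hz hyz =>
    hincr (_, t') (_, t') ⟨hsub.2 _ _ (arcOSet_le_exp hy hz hyz), h𝔅.le_refl hA ht'⟩⟩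

theorem isOpen_Kset [TopologicalSpace Y] (h𝔅 : IsOrderedBasis 𝔅) (h𝔟 : IsOrderedBasis 𝔟)
    (hf : LocIncr (prodBasis dCircleBasis 𝔅) 𝔟 f) : IsOpen (Kset f) := by
  refine isOpen_iff_forall_mem_open.2 fun t ht => ?_
  obtain ⟨B', hB', hB't⟩ := h𝔟.exists_mem (f (1, t))
  have hmem (x : ℝ) : f (Circle.exp x, t) ∈ B'.carrier := ht _ 1 ▸ hB't
  choose I hIo hxI A hA htA hmono using fun x => exists_relMonotoneOn_of_locIncr h𝔅 hf hB' (hmem x)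
  obtain ⟨U, V, -, hVo, hsub, htV, hUV⟩ :=
    generalized_tube_lemma (isCompact_Icc (a := 0) (b := 2 * π)) (isCompact_singleton (x := t))
      (isOpen_iUnion fun x => (hIo x).prod (h𝔅.isOpen_carrier (hA x)))
      (fun p ⟨_, hp⟩ => mem_iUnion.2 ⟨p.1, hxI p.1, (mem_singleton_iff.1 hp).symm ▸ htA p.1⟩)
  refine ⟨V, fun t' ht' => ?_, hVo, htV rfl⟩
  have hP := h𝔟.isPoset B' hB'
  refine eq_of_relMonotoneOn_comp_exp (φ := fun s => f (s, t')) hP.2.2.1 ?_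
  refine RelMonotoneOn.Icc_of_locally hP.2.2.2 fun x hx => ?_
  obtain ⟨x₀, hx₀, ht'₀⟩ := mem_iUnion.1 (hUV (mk_mem_prod (hsub hx) ht'))
  exact ⟨I x₀, hIo x₀, hx₀, hmono x₀ t' ht'₀⟩

end Kset

section XO

variable {X : Type u} {O : Set X}

lemma qO_of_mem {t : X} (ht : t ∈ O) (s : Circle) : qO O (s, t) = Sum.inl ⟨t, ht⟩ := dif_pos ht

lemma qO_of_notMem {t : X} (ht : t ∉ O) (s : Circle) : qO O (s, t) = Sum.inr (s, ⟨t, ht⟩) :=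
  dif_neg ht

lemma qO_congr_left {t : X} (ht : t ∈ O) (s s' : Circle) : qO O (s, t) = qO O (s', t) := by
  rw [qO_of_mem ht, qO_of_mem ht]

lemma qO_surjective : Function.Surjective (qO O) := by
  rintro (⟨t, ht⟩ | ⟨s, t, ht⟩)
  · exact ⟨(1, t), qO_of_mem ht 1⟩
  · exact ⟨(s, t), qO_of_notMem ht s⟩

lemma XO.p2_qO (x : Circle × X) : (qO O x).p2 = x.2 := by
  obtain ⟨s, t⟩ := x
  by_cases ht : t ∈ O
  · rw [qO_of_mem ht]
    rfl
  · rw [qO_of_notMem ht]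
    rfl

lemma qO_eq_inr {x : Circle × X} {s : Circle} {t : ↥Oᶜ} (h : qO O x = Sum.inr (s, t)) :
    x.1 = s := by
  obtain ⟨s', t'⟩ := x
  by_cases ht : t' ∈ O
  · rw [qO_of_mem ht] at h
    exact absurd h Sum.inl_ne_inr
  · rw [qO_of_notMem ht] at h
    exact (Prod.mk.inj (Sum.inr.inj h)).1

lemma inl_mem_USet {αc : Set Circle} {A : Set X} {t : ↥O} :
    (Sum.inl t : XO X O) ∈ USet O αc A ↔ (t : X) ∈ A := by
  refine ⟨?_, fun h => Or.inl ⟨t, h, rfl⟩⟩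
  rintro (⟨t', ht', he⟩ | ⟨p, -, he⟩)
  · cases he
    exact ht'
  · cases he

lemma inr_mem_USet {αc : Set Circle} {A : Set X} {s : Circle} {t : ↥Oᶜ} :
    (Sum.inr (s, t) : XO X O) ∈ USet O αc A ↔ s ∈ αc ∧ (t : X) ∈ A := by
  refine ⟨?_, fun h => Or.inr ⟨(s, t), h, rfl⟩⟩
  rintro (⟨t', -, he⟩ | ⟨p, hp, he⟩)
  · cases he
  · cases he
    exact hp

lemma preimage_qO_USet (αc : Set Circle) (A : Set X) :
    qO O ⁻¹' USet O αc A = univ ×ˢ (O ∩ A) ∪ αc ×ˢ A := by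
  ext ⟨s, t⟩
  by_cases ht : t ∈ O
  · rw [mem_preimage, qO_of_mem ht]
    exact inl_mem_USet.trans (by simp [ht])
  · rw [mem_preimage, qO_of_notMem ht]
    exact inr_mem_USet.trans (by simp [ht])

lemma qO_mem_USet_iff {αc : Set Circle} {A : Set X} {s : Circle} {t : X} :
    qO O (s, t) ∈ USet O αc A ↔ t ∈ A ∧ (t ∈ O ∨ s ∈ αc) := by
  rw [← mem_preimage, preimage_qO_USet]
  simp only [mem_union, mem_prod, mem_univ, mem_inter_iff, true_and]
  tauto

lemma qO_mem_USet_of_mem_prod {αc : Set Circle} {A : Set X} {x : Circle × X}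
    (hx : x ∈ αc ×ˢ A) : qO O x ∈ USet O αc A := by
  rw [← mem_preimage, preimage_qO_USet]
  exact Or.inr hx

lemma USet_eq_image {αc : Set Circle} (hα : αc.Nonempty) (A : Set X) :
    USet O αc A = qO O '' (αc ×ˢ A) := by
  refine Subset.antisymm (fun u hu => ?_) ?_
  · obtain ⟨⟨s, t⟩, rfl⟩ := qO_surjective u
    rw [← mem_preimage, preimage_qO_USet] at hu
    rcases hu with ⟨-, htO, htA⟩ | hst
    · obtain ⟨s₀, hs₀⟩ := hα
      exact ⟨(s₀, t), ⟨hs₀, htA⟩, qO_congr_left htO _ _⟩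
    · exact ⟨_, hst, rfl⟩
  · rintro _ ⟨x, hx, rfl⟩
    rw [← mem_preimage, preimage_qO_USet]
    exact Or.inr hx

lemma exists_qO_eq_of_mem_USet {αc : Set Circle} (hα : αc.Nonempty) {A : Set X}
    {u : XO X O} (hu : u ∈ USet O αc A) : ∃ x ∈ αc ×ˢ A, qO O x = u := by
  rwa [USet_eq_image hα] at hu

lemma USet_mono {αc αc' : Set Circle} {A A' : Set X} (hα : αc ⊆ αc') (hA : A ⊆ A') :
    USet O αc A ⊆ USet O αc' A' :=
  union_subset_union (image_mono fun _ ht => hA ht)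
    (image_mono fun _ hp => ⟨hα hp.1, hA hp.2⟩)

lemma USet_eq_of_subset {A : Set X} (hAO : A ⊆ O) (αc αc' : Set Circle) :
    USet O αc A = USet O αc' A := by
  simp only [USet]
  congr 2
  ext ⟨s, t, ht⟩
  exact ⟨fun h => absurd (hAO h.2) ht, fun h => absurd (hAO h.2) ht⟩

lemma isOpen_USet [TopologicalSpace X] (hO : IsOpen O) {αc : Set Circle} {A : Set X}
    (hα : IsOpen αc) (hA : IsOpen A) : IsOpen (USet O αc A) := by
  refine isOpen_coinduced.2 ?_
  rw [preimage_qO_USet]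
  exact (isOpen_univ.prod (hO.inter hA)).union (hα.prod hA)

end XO

section UOSet

variable {X : Type u} {O : Set X} {α α' : OSet Circle} {A A' : OSet X}

lemma UOSet_laxSub_UOSet (hα : α.laxSub α') (hA : A.laxSub A') :
    (UOSet O α A).laxSub (UOSet O α' A') :=
  ⟨USet_mono hα.1 hA.1, Relation.TransGen.mono fun _ _ ⟨x, x', h₁, h₂, h₃, h₄⟩ =>
    ⟨x, x', hα.2 _ _ h₁, hA.2 _ _ h₂, h₃, h₄⟩⟩

/-- Over `O` the circle coordinate is collapsed by `q_O`, so the arc plays no role. -/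
lemma UOSet_eq_of_subset (hA : ∀ p q, A.le p q → p ∈ A.carrier ∧ q ∈ A.carrier)
    (hAO : A.carrier ⊆ O) (hα : ∃ s, α.le s s) (hα' : ∃ s, α'.le s s) :
    UOSet O α A = UOSet O α' A := by
  have key : ∀ {α α' : OSet Circle}, (∃ s, α'.le s s) →
      ∀ u v, leOne O α A u v → leOne O α' A u v := by
    rintro α α' ⟨s₀, hs₀⟩ u v ⟨⟨s, t⟩, ⟨s', t'⟩, -, htt', rfl, rfl⟩
    exact ⟨(s₀, t), (s₀, t'), hs₀, htt', qO_congr_left (hAO (hA _ _ htt').1) _ _,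
      qO_congr_left (hAO (hA _ _ htt').2) _ _⟩
  have hle : leOne O α A = leOne O α' A :=
    funext₂ fun u v => propext ⟨key hα' u v, key hα u v⟩
  simp only [UOSet, hle, USet_eq_of_subset hAO α.carrier α'.carrier]

lemma qO_le_UOSet {x y : Circle × X} (h : (α.prod A).le x y) :
    (UOSet O α A).le (qO O x) (qO O y) :=
  .single ⟨x, y, h.1, h.2, rfl, rfl⟩

lemma leOne_p2 {u v : XO X O} (h : leOne O α A u v) : A.le u.p2 v.p2 := by
  obtain ⟨x, y, -, hxy, rfl, rfl⟩ := h
  rwa [XO.p2_qO, XO.p2_qO]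

lemma leOne_inr_inr {s s' : Circle} {t t' : ↥Oᶜ}
    (h : leOne O α A (Sum.inr (s, t)) (Sum.inr (s', t'))) : α.le s s' := by
  obtain ⟨x, y, hxy, -, hx, hy⟩ := h
  rwa [← qO_eq_inr hx, ← qO_eq_inr hy]

/-- Between two points over the same `t ∉ O`, a chain of `≤¹`-steps stays over `t` (by
antisymmetry of `A`), so it moves along the arc only. -/
lemma UOSet_le_invariant (hα : α.IsPoset) (hA : A.IsPoset) {u v : XO X O}
    (h : (UOSet O α A).le u v) :
    A.le u.p2 v.p2 ∧ ∀ (s s' : Circle) (t t' : ↥Oᶜ), u = Sum.inr (s, t) →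
      v = Sum.inr (s', t') → (t : X) = t' → α.le s s' := by
  induction h with
  | single h =>
    refine ⟨leOne_p2 h, ?_⟩
    rintro s s' t t' rfl rfl -
    exact leOne_inr_inr h
  | @tail v w _ hvw ih =>
    refine ⟨hA.2.2.2 _ _ _ ih.1 (leOne_p2 hvw), ?_⟩
    rintro s s'' t t'' rfl rfl htt
    have hv : v.p2 = t := hA.2.2.1 _ _ (htt ▸ leOne_p2 hvw) ih.1
    rcases v with ⟨tv, htv⟩ | ⟨sv, tv⟩
    · exact absurd (hv ▸ htv) t.2
    · exact hα.2.2.2 _ _ _ (ih.2 s sv t tv rfl rfl hv.symm) (leOne_inr_inr hvw)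

lemma UOSet_isPoset (hα : α.IsPoset) (hαne : α.carrier.Nonempty) (hA : A.IsPoset) :
    (UOSet O α A).IsPoset := by
  have hmem : ∀ {u v}, leOne O α A u v →
      u ∈ (UOSet O α A).carrier ∧ v ∈ (UOSet O α A).carrier := by
    rintro _ _ ⟨x, y, h₁, h₂, rfl, rfl⟩
    simp only [UOSet, USet_eq_image hαne]
    exact ⟨⟨x, ⟨(hα.1 _ _ h₁).1, (hA.1 _ _ h₂).1⟩, rfl⟩,
      ⟨y, ⟨(hα.1 _ _ h₁).2, (hA.1 _ _ h₂).2⟩, rfl⟩⟩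
  refine ⟨fun u v h => ?_, fun u hu => ?_, fun u v huv hvu => ?_,
    fun _ _ _ => Relation.TransGen.trans⟩
  · induction h with
    | single h => exact hmem h
    | tail _ hvw ih => exact ⟨ih.1, (hmem hvw).2⟩
  · obtain ⟨x, hx, rfl⟩ := exists_qO_eq_of_mem_USet hαne hu
    exact qO_le_UOSet ⟨hα.2.1 _ hx.1, hA.2.1 _ hx.2⟩
  · obtain ⟨⟨s, t⟩, rfl⟩ := qO_surjective u
    obtain ⟨⟨s', t'⟩, rfl⟩ := qO_surjective v
    obtain ⟨h₁, h₂⟩ := UOSet_le_invariant hα hA huv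
    obtain ⟨h₁', h₂'⟩ := UOSet_le_invariant hα hA hvu
    simp only [XO.p2_qO] at h₁ h₁'
    obtain rfl : t = t' := hA.2.2.1 _ _ h₁ h₁'
    by_cases ht : t ∈ O
    · exact qO_congr_left ht s s'
    · simp only [qO_of_notMem ht] at h₂ h₂' ⊢
      rw [hα.2.2.1 _ _ (h₂ s s' _ _ rfl rfl rfl) (h₂' s' s _ _ rfl rfl rfl)]

end UOSet

section XOBasis

variable {X : Type u} {𝔅 : Set (OSet X)} {O : Set X}

/-- Unlike `XOBasis 𝔅 O`, whose open posets `A` need not be posets, this is an ordered basis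
of `X_O`. -/
def XOBasis₀ (𝔅 : Set (OSet X)) (O : Set X) : Set (OSet (XO X O)) :=
  {C | ∃ α ∈ dCircleBasis, ∃ A ∈ 𝔅, C = UOSet O α A}

lemma UOSet_mem_XOBasis {α : OSet Circle} {A : OSet X} (hα : α ∈ dCircleBasis)
    (hA : A ∈ openPosets 𝔅) : UOSet O α A ∈ XOBasis 𝔅 O := by
  obtain ⟨a, b, h₁, h₂, rfl⟩ := hα
  exact ⟨a, b, h₁, h₂, A, hA, rfl⟩

lemma XOBasis₀_subset_XOBasis : XOBasis₀ 𝔅 O ⊆ XOBasis 𝔅 O := by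
  rintro _ ⟨α, hα, A, hA, rfl⟩
  exact UOSet_mem_XOBasis hα (mem_openPosets_of_mem hA)

variable [TopologicalSpace X]

lemma exists_prod_subset (h𝔅 : IsOrderedBasis 𝔅) {W : Set (Circle × X)} (hW : IsOpen W)
    {x : Circle × X} (hx : x ∈ W) :
    ∃ α ∈ dCircleBasis, ∃ A ∈ 𝔅, x ∈ α.carrier ×ˢ A.carrier ∧ α.carrier ×ˢ A.carrier ⊆ W := by
  obtain ⟨U, V, hU, hV, hxU, hxV, hUV⟩ := isOpen_prod_iff.1 hW x.1 x.2 hx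
  obtain ⟨α, hα, hsα, hαU⟩ := isOrderedBasis_dCircleBasis.exists_mem_subset hU hxU
  obtain ⟨A, hA, htA, hAV⟩ := h𝔅.exists_mem_subset hV hxV
  exact ⟨α, hα, A, hA, ⟨hsα, htA⟩, (prod_mono hαU hAV).trans hUV⟩

lemma isTopologicalBasis_XOBasis₀ (h𝔅 : IsOrderedBasis 𝔅) (hO : IsOpen O) :
    TopologicalSpace.IsTopologicalBasis (OSet.carrier '' XOBasis₀ 𝔅 O) := by
  refine TopologicalSpace.isTopologicalBasis_of_isOpen_of_nhds ?_ fun u W hu hW => ?_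
  · rintro _ ⟨_, ⟨α, hα, A, hA, rfl⟩, rfl⟩
    exact isOpen_USet hO (isOrderedBasis_dCircleBasis.isOpen_carrier hα) (h𝔅.isOpen_carrier hA)
  · obtain ⟨x, rfl⟩ := qO_surjective u
    obtain ⟨α, hα, A, hA, hx, hsub⟩ := exists_prod_subset h𝔅 (isOpen_coinduced.1 hW) hu
    refine ⟨_, ⟨_, ⟨α, hα, A, hA, rfl⟩, rfl⟩, qO_mem_USet_of_mem_prod hx, ?_⟩
    rintro _ hv
    obtain ⟨y, hy, rfl⟩ := exists_qO_eq_of_mem_USet (nonempty_of_mem_dCircleBasis hα) hv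
    exact hsub hy

lemma isOrderedBasis_XOBasis₀ (h𝔅 : IsOrderedBasis 𝔅) (hO : IsOpen O) :
    IsOrderedBasis (XOBasis₀ 𝔅 O) := by
  refine .of_laxSub ?_ (isTopologicalBasis_XOBasis₀ h𝔅 hO) ?_
  · rintro _ ⟨α, hα, A, hA, rfl⟩
    exact UOSet_isPoset (isOrderedBasis_dCircleBasis.isPoset α hα)
      (nonempty_of_mem_dCircleBasis hα) (h𝔅.isPoset A hA)
  rintro u _ ⟨α, hα, A, hA, rfl⟩ _ ⟨α', hα', A', hA', rfl⟩ hu hu'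
  obtain ⟨⟨s, t⟩, rfl⟩ := qO_surjective u
  obtain ⟨htA, hst⟩ := qO_mem_USet_iff.1 hu
  obtain ⟨htA', hst'⟩ := qO_mem_USet_iff.1 hu'
  obtain ⟨A₁, hA₁, htA₁, hA₁A, hA₁A'⟩ := h𝔅.exists_laxSub_laxSub hA hA' htA htA'
  by_cases ht : t ∈ O
  · obtain ⟨A₂, hA₂, htA₂, hA₂O, hA₂A₁⟩ := h𝔅.exists_laxSub_subset hA₁ hO htA₁ ht
    refine ⟨UOSet O α A₂, ⟨α, hα, A₂, hA₂, rfl⟩, qO_mem_USet_iff.2 ⟨htA₂, .inl ht⟩,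
      UOSet_laxSub_UOSet (.refl α) (hA₂A₁.trans hA₁A), ?_⟩
    rw [UOSet_eq_of_subset (h𝔅.isPoset A₂ hA₂).1 hA₂O (exists_le_self_of_mem_dCircleBasis hα)
      (exists_le_self_of_mem_dCircleBasis hα')]
    exact UOSet_laxSub_UOSet (.refl α') (hA₂A₁.trans hA₁A')
  · obtain ⟨γ, hγ, hsγ, hγα, hγα'⟩ := isOrderedBasis_dCircleBasis.exists_laxSub_laxSub hα hα'
      (hst.resolve_left ht) (hst'.resolve_left ht)
    exact ⟨UOSet O γ A₁, ⟨γ, hγ, A₁, hA₁, rfl⟩, qO_mem_USet_iff.2 ⟨htA₁, .inr hsγ⟩,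
      UOSet_laxSub_UOSet hγα hA₁A, UOSet_laxSub_UOSet hγα' hA₁A'⟩

lemma locIncr_qO (h𝔅 : IsOrderedBasis 𝔅) (hO : IsOpen O) :
    LocIncr (prodBasis dCircleBasis 𝔅) (XOBasis 𝔅 O) (qO O) := by
  rintro ⟨s, t⟩ _ ⟨a, b, hab, hab', A, hA, rfl⟩ hst
  have hα : arcOSet a b ∈ dCircleBasis := ⟨a, b, hab, hab', rfl⟩
  suffices ∃ γ ∈ dCircleBasis, ∃ B ∈ 𝔅, (s, t) ∈ γ.carrier ×ˢ B.carrier ∧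
      (UOSet O γ B).laxSub (UOSet O (arcOSet a b) A) by
    obtain ⟨γ, hγ, B, hB, hst', hsub⟩ := this
    exact ⟨γ.prod B, ⟨γ, hγ, B, hB, rfl⟩, hst', fun _ hx => hsub.1 (qO_mem_USet_of_mem_prod hx),
      fun _ _ hxy => hsub.2 _ _ (qO_le_UOSet hxy)⟩
  obtain ⟨htA, hts⟩ := qO_mem_USet_iff.1 hst
  obtain ⟨B, hB, htB, hBA⟩ := hA t htA
  by_cases ht : t ∈ O
  · obtain ⟨B₁, hB₁, htB₁, hB₁O, hB₁B⟩ := h𝔅.exists_laxSub_subset hB hO htB ht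
    obtain ⟨γ, hγ, hsγ⟩ := isOrderedBasis_dCircleBasis.exists_mem s
    refine ⟨γ, hγ, B₁, hB₁, ⟨hsγ, htB₁⟩, ?_⟩
    rw [UOSet_eq_of_subset (h𝔅.isPoset B₁ hB₁).1 hB₁O (exists_le_self_of_mem_dCircleBasis hγ)
      (exists_le_self_of_mem_dCircleBasis hα)]
    exact UOSet_laxSub_UOSet (.refl _) (hB₁B.trans hBA)
  · exact ⟨_, hα, B, hB, ⟨hts.resolve_left ht, htB⟩, UOSet_laxSub_UOSet (.refl _) hBA⟩

end XOBasis

section Coequalizer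

variable {X : Type u} {𝔅 : Set (OSet X)} {O : Set X} {Y : Type v} {𝔟 : Set (OSet Y)}
  {f : Circle × X → Y}

noncomputable def XO.lift (O : Set X) (f : Circle × X → Y) : XO X O → Y :=
  Sum.elim (fun t => f (1, t)) (fun p => f (p.1, p.2))

lemma XO.lift_qO (hOK : O ⊆ Kset f) (x : Circle × X) : XO.lift O f (qO O x) = f x := by
  obtain ⟨s, t⟩ := x
  by_cases ht : t ∈ O
  · rw [qO_of_mem ht]
    exact hOK ht 1 s
  · rw [qO_of_notMem ht]
    rfl

lemma XO.locIncr_lift (h𝔟 : ∀ B' ∈ 𝔟, B'.IsPoset) (hf : LocIncr (prodBasis dCircleBasis 𝔅) 𝔟 f)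
    (hOK : O ⊆ Kset f) : LocIncr (XOBasis₀ 𝔅 O) 𝔟 (XO.lift O f) := by
  intro u B' hB' hu
  obtain ⟨x, rfl⟩ := qO_surjective u
  rw [XO.lift_qO hOK] at hu
  obtain ⟨_, ⟨β, hβ, A, hA, rfl⟩, hx, hmaps, hincr⟩ := hf x B' hB' hu
  refine ⟨UOSet O β A, ⟨β, hβ, A, hA, rfl⟩, qO_mem_USet_of_mem_prod hx, fun v hv => ?_,
    fun v w hvw => ?_⟩
  · obtain ⟨y, hy, rfl⟩ := exists_qO_eq_of_mem_USet (nonempty_of_mem_dCircleBasis hβ) hv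
    rw [XO.lift_qO hOK]
    exact hmaps y hy
  · refine Relation.TransGen.rel_of_forall (h𝔟 B' hB').2.2.2 _ ?_ hvw
    rintro _ _ ⟨y, z, h₁, h₂, rfl, rfl⟩
    rw [XO.lift_qO hOK, XO.lift_qO hOK]
    exact hincr y z ⟨h₁, h₂⟩

lemma Kset_qO_subset : Kset (qO O) ⊆ O := by
  intro t ht
  by_contra htO
  have h := ht 1 (Circle.exp π)
  rw [qO_of_notMem htO, qO_of_notMem htO] at h
  exact Circle.exp_pi_ne_one (Prod.mk.inj (Sum.inr.inj h)).1.symm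

variable [TopologicalSpace X]

noncomputable def XO.locOrdSpace (h𝔅 : IsOrderedBasis 𝔅) (hO : IsOpen O) : LocOrdSpace.{u} :=
  ⟨XO X O, XO.topology O, XOBasis₀ 𝔅 O, isOrderedBasis_XOBasis₀ h𝔅 hO⟩

theorem isCoeqIn_qO (h𝔅 : IsOrderedBasis 𝔅) {star : X} (hO : IsOpen O) (hstar : star ∈ O)
    (hmin : ∀ U : Set X, IsOpen U → star ∈ U → O ⊆ U) {𝔠 : Set (OSet (XO X O))}
    (h𝔠₀ : XOBasis₀ 𝔅 O ⊆ 𝔠) (h𝔠 : 𝔠 ⊆ XOBasis 𝔅 O) :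
    IsCoeqIn (fun _ : LocOrdSpace.{u} => True) (prodBasis dCircleBasis 𝔅) 𝔠
      (fun s : Circle => (s, star)) (fun _ : Circle => ((1 : Circle), star)) (qO O) := by
  refine ⟨(locIncr_qO h𝔅 hO).anti_target h𝔠, funext fun s => qO_congr_left hstar s 1, ?_⟩
  rintro Y - f hf hfc
  let _ : TopologicalSpace Y.carrier := Y.top
  have hOK : O ⊆ Kset f := hmin _ (isOpen_Kset h𝔅 Y.isBasis hf) (mem_Kset_of_comp_eq hfc)
  refine ⟨XO.lift O f, ⟨(XO.locIncr_lift Y.isBasis.isPoset hf hOK).mono_source h𝔠₀,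
    funext fun x => (XO.lift_qO hOK x).symm⟩, ?_⟩
  rintro h ⟨-, rfl⟩
  funext u
  obtain ⟨x, rfl⟩ := qO_surjective u
  exact (XO.lift_qO hOK x).symm

theorem exists_smallest_nhds_of_isCoeqIn (h𝔅 : IsOrderedBasis 𝔅) (star : X)
    (hex : ∃ (C : LocOrdSpace.{u}) (g : Circle × X → C.carrier),
      IsCoeqIn (fun _ : LocOrdSpace.{u} => True) (prodBasis dCircleBasis 𝔅) C.basis
        (fun s : Circle => (s, star)) (fun _ : Circle => ((1 : Circle), star)) g) :
    ∃ O : Set X, (IsOpen O ∧ star ∈ O) ∧ ∀ U : Set X, IsOpen U → star ∈ U → O ⊆ U := by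
  obtain ⟨C, g, hg, hgc, huniv⟩ := hex
  let _ : TopologicalSpace C.carrier := C.top
  refine ⟨Kset g, ⟨isOpen_Kset h𝔅 C.isBasis hg, mem_Kset_of_comp_eq hgc⟩, fun U hU hstar => ?_⟩
  obtain ⟨h, ⟨-, hq⟩, -⟩ := huniv (XO.locOrdSpace h𝔅 hU) trivial (qO U)
    ((locIncr_qO h𝔅 hU).anti_target XOBasis₀_subset_XOBasis)
    (funext fun s => qO_congr_left hstar s 1)
  calc Kset g ⊆ Kset (h ∘ g) := Kset_subset_Kset_comp h
    _ = Kset (qO U) := congrArg Kset hq.symm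
    _ ⊆ U := Kset_qO_subset

end Coequalizer

/-- In the category of locally ordered spaces, the pair
`i⋆, c⋆ : S¹ → S⃗¹ × X` has a coequalizer iff the family of open neighbourhoods
of `⋆` has a smallest element; and if `O` is this smallest open neighbourhood
then `q_O` is the coequalizer. -/
theorem stmt10 {X : Type u} [TopologicalSpace X] (𝔅 : Set (OSet X))
    (h𝔅 : IsOrderedBasis 𝔅) (star : X) :
    ((∃ (C : LocOrdSpace.{u}) (g : Circle × X → C.carrier),
        IsCoeqIn (fun _ : LocOrdSpace.{u} => True) (prodBasis dCircleBasis 𝔅) C.basis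
          (fun s : Circle => (s, star)) (fun _ : Circle => ((1 : Circle), star)) g) ↔
      ∃ O : Set X, (IsOpen O ∧ star ∈ O) ∧
        ∀ U : Set X, IsOpen U → star ∈ U → O ⊆ U) ∧
    ∀ O : Set X, IsOpen O → star ∈ O → (∀ U : Set X, IsOpen U → star ∈ U → O ⊆ U) →
      IsCoeqIn (fun _ : LocOrdSpace.{u} => True) (prodBasis dCircleBasis 𝔅) (XOBasis 𝔅 O)
        (fun s : Circle => (s, star)) (fun _ : Circle => ((1 : Circle), star)) (qO O) := by
  refine ⟨⟨exists_smallest_nhds_of_isCoeqIn h𝔅 star, ?_⟩, fun O hO hstar hmin =>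
    isCoeqIn_qO h𝔅 hO hstar hmin XOBasis₀_subset_XOBasis subset_rfl⟩
  rintro ⟨O, ⟨hO, hstar⟩, hmin⟩
  exact ⟨XO.locOrdSpace h𝔅 hO, qO O,
    isCoeqIn_qO h𝔅 hO hstar hmin subset_rfl XOBasis₀_subset_XOBasis⟩
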